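/- arXiv:1802.03687 — 2 statements merged into one kernel-verified Lean document; each statement's English description precedes it below -/
import Mathlib

section
/- Let n = (n_x, n_y) and t = (t_x, t_y) be unit vectors in ℝ² with t·n = 0, and let μ > 0, λ with λ + μ > 0. Then the determinant of the 2×2 matrix with rows ( t_y n_x (λ+2μ) − μ t_x n_y , −(λ+μ) n_x t_x ) and ( −(λ+μ) n_x t_x , μ n_x t_y − (λ+2μ) n_y t_x ) equals μ(λ+2μ)(n_x² + t_x²), which is strictly positive provided n_x and t_x are not both zero. -/
open Matrix

/-- For unit vectors `n = (n_x,n_y)`, `t = (t_x,t_y)` with `t·n = 0`, `μ > 0`, and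
`λ + μ > 0`, the determinant of the boundary-condition matrix equals
`μ(λ+2μ)(n_x² + t_x²)`, which is positive unless `n_x = t_x = 0`. -/
theorem appendixB_determinant
    (nx ny tx ty μ lam : ℝ)
    (hn : nx ^ 2 + ny ^ 2 = 1) (ht : tx ^ 2 + ty ^ 2 = 1)
    (horth : tx * nx + ty * ny = 0)
    (hμ : 0 < μ) (hlμ : 0 < lam + μ) :
    (!![ty * nx * (lam + 2 * μ) - μ * tx * ny, -((lam + μ) * nx * tx);
        -((lam + μ) * nx * tx), μ * nx * ty - (lam + 2 * μ) * ny * tx]).det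
      = μ * (lam + 2 * μ) * (nx ^ 2 + tx ^ 2) ∧
    (¬ (nx = 0 ∧ tx = 0) →
      0 < (!![ty * nx * (lam + 2 * μ) - μ * tx * ny, -((lam + μ) * nx * tx);
              -((lam + μ) * nx * tx), μ * nx * ty - (lam + 2 * μ) * ny * tx]).det) := by
  have hdet : (!![ty * nx * (lam + 2 * μ) - μ * tx * ny, -((lam + μ) * nx * tx);
        -((lam + μ) * nx * tx), μ * nx * ty - (lam + 2 * μ) * ny * tx]).det
      = μ * (lam + 2 * μ) * (nx ^ 2 + tx ^ 2) := by
    rw [Matrix.det_fin_two_of]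
    linear_combination (-(((lam + 2*μ)^2 + μ^2) * nx * tx)) * horth
      + (μ * (lam + 2*μ) * tx^2) * hn + (μ * (lam + 2*μ) * nx^2) * ht
  refine ⟨hdet, fun h => ?_⟩
  rw [hdet]
  have hpos : 0 < nx ^ 2 + tx ^ 2 := by
    rcases not_and_or.mp h with h1 | h1 <;> positivity
  have : 0 < lam + 2 * μ := by linarith
  positivity
end

section
/- For any real unit vectors n = (cos θ, sin θ) and t = (−sin θ, cos θ), and any scalars μ, λ, the normal traction of the radially symmetric field u = (J(ar) cos θ, J(ar) sin θ) on the circle r = R has first component (λ (J'(aR)·a + J(aR)/R) + 2μ a J'(aR)) cos θ and second component (λ (a J'(aR) + J(aR)/R) + 2μ a J'(aR)) sin θ, i.e., σ(u)n is a scalar multiple of n. -/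
/-!
At a point `p = R n` with `|n| = 1`, differentiating `u(x) = f(|x|) x` with `f(r) = J(ar)/r`
gives the gradient `f(R) I + R f'(R) n nᵀ = (J(aR)/R) I + (a J'(aR) - J(aR)/R) n nᵀ`:
a multiple of the identity plus a rank-one matrix along `n`. Such a matrix is symmetric, so
it is its own strain, and it maps `n` to `a J'(aR) n`; the trace term is a multiple of the
identity, so `σ(u) n` is a multiple of `n` as well.
-/

open Matrix

section RadialField

variable {F : Type*} [NormedAddCommGroup F] [InnerProductSpace ℝ F]

theorem hasFDerivAt_norm_of_ne_zero {x : F} (hx : x ≠ 0) :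
    HasFDerivAt (‖·‖) (‖x‖⁻¹ • innerSL ℝ x) x := by
  have hsqrt := (Real.hasDerivAt_sqrt (by positivity : ‖x‖ ^ 2 ≠ 0)).comp_hasFDerivAt x
    (hasStrictFDerivAt_norm_sq x).hasFDerivAt
  simp only [Real.sqrt_sq (norm_nonneg _)] at hsqrt
  refine (hsqrt.congr_fderiv ?_).congr_of_eventuallyEq (.of_forall fun y => ?_)
  · rw [← Nat.cast_smul_eq_nsmul ℝ, smul_smul, Nat.cast_ofNat]; congr 1; field_simp
  · simp [Real.sqrt_sq (norm_nonneg y)]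

theorem hasFDerivAt_smul_radial {f : ℝ → ℝ} {f' : ℝ} {x : F} (hx : x ≠ 0)
    (hf : HasDerivAt f f' ‖x‖) :
    HasFDerivAt (fun y => f ‖y‖ • y)
      (f ‖x‖ • ContinuousLinearMap.id ℝ F + (f' / ‖x‖) • (innerSL ℝ x).smulRight x) x := by
  refine ((hf.comp_hasFDerivAt x (hasFDerivAt_norm_of_ne_zero hx)).smul
    (hasFDerivAt_id x)).congr_fderiv ?_
  ext v
  simp [div_eq_mul_inv, mul_smul]

end RadialField

namespace EuclideanSpace

variable {ι : Type*} [Fintype ι]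

theorem norm_eq_of_apply_eq_mul {x : EuclideanSpace ℝ ι} {n : ι → ℝ} {R : ℝ} (hR : 0 ≤ R)
    (hn : n ⬝ᵥ n = 1) (hx : ∀ i, x i = R * n i) : ‖x‖ = R := by
  have hsum : ∑ i, ‖x i‖ ^ 2 = R ^ 2 * (n ⬝ᵥ n) := by
    rw [dotProduct, Finset.mul_sum]
    exact Finset.sum_congr rfl fun i _ => by rw [Real.norm_eq_abs, sq_abs, hx]; ring
  rw [EuclideanSpace.norm_eq, hsum, hn, mul_one, Real.sqrt_sq hR]

theorem fderiv_smul_radial_apply_single [DecidableEq ι] {f : ℝ → ℝ} {f' : ℝ}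
    {x : EuclideanSpace ℝ ι} (hx : x ≠ 0) (hf : HasDerivAt f f' ‖x‖) (i j : ι) :
    fderiv ℝ (fun y => f ‖y‖ • y) x (EuclideanSpace.single j 1) i =
      (f ‖x‖ • (1 : Matrix ι ι ℝ) + (f' / ‖x‖) • vecMulVec x x) i j := by
  rw [(hasFDerivAt_smul_radial hx hf).fderiv]
  simp [EuclideanSpace.inner_single_right, vecMulVec_apply, one_apply, mul_comm]

end EuclideanSpace

namespace Matrix

theorem IsSymm.inv_two_smul_add_transpose {ι : Type*} {G : Matrix ι ι ℝ} (hG : G.IsSymm) :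
    (2 : ℝ)⁻¹ • (G + Gᵀ) = G := by
  rw [hG.eq, ← two_smul ℝ G, smul_smul]; norm_num

section IsotropicPlusRankOne

variable {ι : Type*} [DecidableEq ι] (α β : ℝ) (n : ι → ℝ)

theorem isSymm_smul_one_add_smul_vecMulVec : (α • 1 + β • vecMulVec n n).IsSymm := by
  simp [IsSymm, transpose_add, transpose_smul]

variable [Fintype ι]

theorem trace_smul_one_add_smul_vecMulVec :
    (α • 1 + β • vecMulVec n n).trace = Fintype.card ι * α + β * (n ⬝ᵥ n) := by
  simp [trace_add, trace_smul, mul_comm]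

theorem smul_one_add_smul_vecMulVec_mulVec :
    (α • 1 + β • vecMulVec n n) *ᵥ n = (α + β * (n ⬝ᵥ n)) • n := by
  rw [add_mulVec, smul_mulVec, smul_mulVec, one_mulVec, vecMulVec_mulVec, op_smul_eq_smul,
    smul_smul, ← add_smul]

theorem lame_stress_mulVec (μ lam : ℝ) (hn : n ⬝ᵥ n = 1) :
    letI ε := α • 1 + β • vecMulVec n n
    ((2 * μ) • ε + (lam * ε.trace) • 1) *ᵥ n =
      (2 * μ * (α + β) + lam * (Fintype.card ι * α + β)) • n := by
  rw [add_mulVec, smul_mulVec, smul_mulVec, one_mulVec, smul_one_add_smul_vecMulVec_mulVec,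
    trace_smul_one_add_smul_vecMulVec, hn]
  module

end IsotropicPlusRankOne

end Matrix

/-- For the radially symmetric field `u(x) = J(a|x|) x/|x|` and unit normal
`n = (cos θ, sin θ)` at the boundary point `R·n` of the disk of radius `R`, the
traction `σ(u)n` (with `σ(u) = 2μ ε(u) + λ tr(ε(u)) I`) has components
`(λ(a J'(aR) + J(aR)/R) + 2μ a J'(aR)) cos θ` and
`(λ(a J'(aR) + J(aR)/R) + 2μ a J'(aR)) sin θ`; in particular it is a scalar multiple
of `n`. -/
theorem radial_traction_is_normal
    (μ lam a R θ : ℝ) (hR : 0 < R)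
    (J : ℝ → ℝ) (hJ : ContDiff ℝ 2 J)
    (u : EuclideanSpace ℝ (Fin 2) → EuclideanSpace ℝ (Fin 2))
    (hu : ∀ x : EuclideanSpace ℝ (Fin 2), x ≠ 0 → u x = (J (a * ‖x‖) / ‖x‖) • x)
    (nv : Fin 2 → ℝ) (hnv : nv = ![Real.cos θ, Real.sin θ])
    (p : EuclideanSpace ℝ (Fin 2)) (hp : ∀ i, p i = R * nv i)
    (gradu : Matrix (Fin 2) (Fin 2) ℝ)
    (hgrad : ∀ i j, gradu i j = fderiv ℝ u p (EuclideanSpace.single j (1 : ℝ)) i)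
    (ε : Matrix (Fin 2) (Fin 2) ℝ) (hε : ε = (2 : ℝ)⁻¹ • (gradu + graduᵀ))
    (σ : Matrix (Fin 2) (Fin 2) ℝ)
    (hσ : σ = (2 * μ) • ε + (lam * ε.trace) • (1 : Matrix (Fin 2) (Fin 2) ℝ)) :
    σ.mulVec nv 0 =
        (lam * (a * deriv J (a * R) + J (a * R) / R) + 2 * μ * a * deriv J (a * R)) *
          Real.cos θ ∧
    σ.mulVec nv 1 =
        (lam * (a * deriv J (a * R) + J (a * R) / R) + 2 * μ * a * deriv J (a * R)) *
          Real.sin θ ∧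
    σ.mulVec nv =
      (lam * (a * deriv J (a * R) + J (a * R) / R) + 2 * μ * a * deriv J (a * R)) • nv := by
  have hn : nv ⬝ᵥ nv = 1 := by simp [hnv, dotProduct, ← sq, Real.cos_sq_add_sin_sq]
  have hpR : ‖p‖ = R := EuclideanSpace.norm_eq_of_apply_eq_mul hR.le hn hp
  have hp0 : p ≠ 0 := norm_pos_iff.mp (hpR ▸ hR)
  have hprofile : HasDerivAt (fun r => J (a * r) / r)
      ((a * deriv J (a * R) * R - J (a * R)) / R ^ 2) ‖p‖ := by
    rw [hpR]
    exact ((((hJ.differentiable two_ne_zero) (a * R)).hasDerivAt.comp R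
      ((hasDerivAt_id R).const_mul a)).div (hasDerivAt_id R) hR.ne').congr_deriv (by simp; ring)
  have hu_eq : u =ᶠ[nhds p] fun y => (J (a * ‖y‖) / ‖y‖) • y :=
    Filter.eventually_of_mem (isOpen_ne.mem_nhds hp0) hu
  have hgradu : gradu =
      (J (a * R) / R) • 1 + (a * deriv J (a * R) - J (a * R) / R) • vecMulVec nv nv := by
    ext i j
    rw [hgrad, hu_eq.fderiv_eq, EuclideanSpace.fderiv_smul_radial_apply_single hp0 hprofile]
    simp only [Matrix.add_apply, Matrix.smul_apply, vecMulVec_apply, hp, hpR, smul_eq_mul]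
    field_simp
  have hsymm : gradu.IsSymm := by
    rw [hgradu]; exact isSymm_smul_one_add_smul_vecMulVec _ _ _
  have hε_eq : ε = gradu := by rw [hε, hsymm.inv_two_smul_add_transpose]
  have htraction : σ *ᵥ nv =
      (lam * (a * deriv J (a * R) + J (a * R) / R) + 2 * μ * a * deriv J (a * R)) • nv := by
    rw [hσ, hε_eq, hgradu, lame_stress_mulVec _ _ nv μ lam hn, Fintype.card_fin]
    congr 1
    push_cast
    ring
  refine ⟨?_, ?_, htraction⟩ <;> rw [htraction] <;> simp [hnv]
end
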